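/- Let f : ℕ → ℝ be a Bohr almost periodic sequence with mean β (i.e. lim_{N→∞} (1/N)∑_{n=1}^N f(n) = β). Then for every ε > 0 there exists a Bohr₀ set B ⊆ ℕ such that for every m ∈ B there exists n ∈ ℕ with |∑_{i=0}^{m-1} f(n+i) − mβ| < ε. -/

import Mathlib

open Function Metric Set Filter

noncomputable section

abbrev Torus := AddCircle (1 : ℝ)

/-- `A ⊆ ℕ` is a Bohr₀ set: it contains all positive `n` with `‖nα‖ < δ`
for some `δ > 0`, `d ∈ ℕ`, `α ∈ 𝕋^d` (L¹ distance to zero). -/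
def IsBohr0 (A : Set ℕ) : Prop :=
  ∃ (d : ℕ) (α : Fin d → Torus) (δ : ℝ), 0 < δ ∧
    ∀ n : ℕ, 0 < n → (∑ i, ‖n • α i‖) < δ → n ∈ A


/-- A real sequence is Bohr almost periodic if all its sets of ε-almost periods
are Bohr₀ sets. -/
def BohrAP (f : ℕ → ℝ) : Prop :=
  ∀ ε : ℝ, 0 < ε → IsBohr0 {m : ℕ | ∀ n : ℕ, |f (n + m) - f n| < ε}

private lemma sum_shift (f : ℕ → ℝ) (m n : ℕ) :
    ∑ i ∈ Finset.range m, f (n + 1 + i)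
      = ∑ i ∈ Finset.range m, f (n + i) + f (n + m) - f n := by
  have h1 := Finset.sum_range_succ' (fun i => f (n + i)) m
  have h2 := Finset.sum_range_succ (fun i => f (n + i)) m
  have h3 : ∑ i ∈ Finset.range m, f (n + (i + 1)) = ∑ i ∈ Finset.range m, f (n + 1 + i) :=
    Finset.sum_congr rfl fun i _ => by rw [show n + (i + 1) = n + 1 + i by omega]
  rw [h3] at h1
  have h4 : f (n + 0) = f n := rfl
  linarith [h1, h2, h4]

private lemma sum_blocks (g : ℕ → ℝ) (m : ℕ) : ∀ k : ℕ,
    ∑ j ∈ Finset.range (k * m), g j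
      = ∑ a ∈ Finset.range k, ∑ i ∈ Finset.range m, g (a * m + i) := by
  intro k
  induction k with
  | zero => simp
  | succ k ih =>
    rw [Finset.sum_range_succ, ← ih, Nat.succ_mul, Finset.sum_range_add]

theorem ap_sums_near_mean (f : ℕ → ℝ) (β : ℝ) (hap : BohrAP f)
    (hmean : Tendsto (fun N : ℕ => (∑ n ∈ Finset.Icc 1 N, f n) / N) atTop (nhds β)) :
    ∀ ε : ℝ, 0 < ε → ∃ B : Set ℕ, IsBohr0 B ∧
      ∀ m ∈ B, ∃ n : ℕ, |(∑ i ∈ Finset.range m, f (n + i)) - m * β| < ε := by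
  intro ε hε
  refine ⟨{m : ℕ | ∀ n : ℕ, |f (n + m) - f n| < ε}, hap ε hε, ?_⟩
  intro m hm
  rcases Nat.eq_zero_or_pos m with hm0 | hmpos
  · exact ⟨0, by simp [hm0, abs_of_nonneg, hε]⟩
  by_contra hcon
  push_neg at hcon
  -- the block sum function
  set g : ℕ → ℝ := fun n => ∑ i ∈ Finset.range m, f (n + i) with hg
  have hstep : ∀ n, |g (n + 1) - g n| < ε := by
    intro n
    have := sum_shift f m n
    have : g (n + 1) - g n = f (n + m) - f n := by rw [hg]; simp only; rw [this]; ring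
    rw [this]; exact hm n
  have habs : ∀ n, ε ≤ |g n - m * β| := hcon
  have hmR : (0 : ℝ) < m := by exact_mod_cast hmpos
  -- sign constancy
  have hsign : (∀ n, m * β + ε ≤ g n) ∨ (∀ n, g n ≤ m * β - ε) := by
    rcases le_or_gt (m * β) (g 0) with h0 | h0
    · left
      intro n
      induction n with
      | zero =>
        have h2 := habs 0
        rw [abs_of_nonneg (by linarith)] at h2
        linarith
      | succ n ih =>
        have h1 := hstep n
        have h2 := habs (n + 1)
        rw [abs_lt] at h1
        rcases le_or_gt (m * β + ε) (g (n + 1)) with h | h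
        · exact h
        · exfalso
          have : g (n + 1) - m * β < ε := by linarith
          have hge : m * β < g (n + 1) := by linarith
          rw [abs_of_pos (by linarith)] at h2; linarith
    · right
      intro n
      induction n with
      | zero =>
        have := habs 0
        rw [abs_of_nonpos (by linarith)] at this; linarith
      | succ n ih =>
        have h1 := hstep n
        have h2 := habs (n + 1)
        rw [abs_lt] at h1
        rcases le_or_gt (g (n + 1)) (m * β - ε) with h | h
        · exact h
        · exfalso
          have hlt : g (n + 1) < m * β := by linarith
          rw [abs_of_neg (by linarith)] at h2; linarith
  -- averages along multiples of m
  have hsub : Tendsto (fun k : ℕ => (∑ n ∈ Finset.Icc 1 (k * m), f n) / ((k * m : ℕ) : ℝ))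
      atTop (nhds β) := by
    apply hmean.comp
    exact tendsto_atTop_mono (fun k => Nat.le_mul_of_pos_right k hmpos) tendsto_id
  have hkey : ∀ k : ℕ, ∑ n ∈ Finset.Icc 1 (k * m), f n = ∑ a ∈ Finset.range k, g (1 + a * m) := by
    intro k
    have h1 : Finset.Icc 1 (k * m) = Finset.Ico 1 (k * m + 1) := by
      rw [Finset.Ico_add_one_right_eq_Icc]
    rw [h1, Finset.sum_Ico_eq_sum_range]
    simp only [Nat.add_sub_cancel]
    rw [sum_blocks (fun j => f (1 + j)) m k]
    refine Finset.sum_congr rfl fun a _ => ?_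
    refine Finset.sum_congr rfl fun i _ => ?_
    congr 1
    omega
  have hmne : (m : ℝ) ≠ 0 := ne_of_gt hmR
  have hεm : 0 < ε / m := div_pos hε hmR
  rcases hsign with hlow | hhigh
  · have hev : ∀ᶠ k : ℕ in atTop, β + ε / m ≤
        (∑ n ∈ Finset.Icc 1 (k * m), f n) / ((k * m : ℕ) : ℝ) := by
      filter_upwards [eventually_ge_atTop 1] with k hk
      have hkm : (0 : ℝ) < ((k * m : ℕ) : ℝ) := by
        have : 0 < k * m := Nat.mul_pos hk hmpos
        exact_mod_cast this
      rw [le_div_iff₀ hkm]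
      have hS : (k : ℝ) * (m * β + ε) ≤ ∑ n ∈ Finset.Icc 1 (k * m), f n := by
        rw [hkey k]
        calc (k : ℝ) * (m * β + ε) = ∑ _a ∈ Finset.range k, (m * β + ε) := by
              rw [Finset.sum_const, Finset.card_range, nsmul_eq_mul]
          _ ≤ ∑ a ∈ Finset.range k, g (1 + a * m) :=
              Finset.sum_le_sum fun a _ => hlow (1 + a * m)
      have : (β + ε / m) * ((k * m : ℕ) : ℝ) = (k : ℝ) * (m * β + ε) := by
        push_cast
        field_simp
      linarith
    have := ge_of_tendsto hsub hev
    linarith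
  · have hev : ∀ᶠ k : ℕ in atTop,
        (∑ n ∈ Finset.Icc 1 (k * m), f n) / ((k * m : ℕ) : ℝ) ≤ β - ε / m := by
      filter_upwards [eventually_ge_atTop 1] with k hk
      have hkm : (0 : ℝ) < ((k * m : ℕ) : ℝ) := by
        have : 0 < k * m := Nat.mul_pos hk hmpos
        exact_mod_cast this
      rw [div_le_iff₀ hkm]
      have hS : ∑ n ∈ Finset.Icc 1 (k * m), f n ≤ (k : ℝ) * (m * β - ε) := by
        rw [hkey k]
        calc ∑ a ∈ Finset.range k, g (1 + a * m)
            ≤ ∑ _a ∈ Finset.range k, (m * β - ε) :=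
              Finset.sum_le_sum fun a _ => hhigh (1 + a * m)
          _ = (k : ℝ) * (m * β - ε) := by
              rw [Finset.sum_const, Finset.card_range, nsmul_eq_mul]
      have : (β - ε / m) * ((k * m : ℕ) : ℝ) = (k : ℝ) * (m * β - ε) := by
        push_cast
        field_simp
      linarith
    have := le_of_tendsto hsub hev
    linarith
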